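/- arXiv:2112.03231 — 4 statements merged into one kernel-verified Lean document; each statement's English description precedes it below -/
import Mathlib

section
/- Let p'_1,…,p'_k be nonnegative reals with ∑_{i=1}^{k} p'_i = 1, and suppose X_1,…,X_n are i.i.d. with P(X_j = i) = p'_i for 1 ≤ i ≤ k, while the statistics S_{n1} and S_{n2} are built from the reference probabilities p_1,…,p_k. Then E[S_{n1}] − (k − 1) = (n − 1) ∑_{i=1}^{k} (p'_i − p_i)²/p_i and E[S_{n2}] = ∑_{i=1}^{k} (p'_i − p_i)/p_i. In particular, when p'_i = p_i for all i, E[S_{n1}] = k − 1 and E[S_{n2}] = 0. -/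
open MeasureTheory ProbabilityTheory Filter Finset Real

/-- The cumulative distribution function of the standard normal distribution:
`Φ(x) = (2π)^{-1/2} ∫_{-∞}^x e^{-t²/2} dt`. -/
noncomputable def stdNormalCDF (x : ℝ) : ℝ :=
  (Real.sqrt (2 * Real.pi))⁻¹ * ∫ t in Set.Iic x, Real.exp (-t ^ 2 / 2)

/-- Observed count `o_i` of cell `i` among the draws `X 0, …, X (n-1)` (as a real number). -/
noncomputable def obsCount {Ω : Type*} (n : ℕ) (X : ℕ → Ω → ℕ) (i : ℕ) (ω : Ω) : ℝ :=
  (((Finset.range n).filter (fun j => X j ω = i)).card : ℝ)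

/-- Pearson's chi-squared statistic `𝒳²_n = ∑_{i=1}^{k} (o_i - n p_i)² / (n p_i)`. -/
noncomputable def chiSqStat {Ω : Type*} (n kn : ℕ) (p : ℕ → ℝ) (X : ℕ → Ω → ℕ) (ω : Ω) : ℝ :=
  ∑ i ∈ Finset.Icc 1 kn, (obsCount n X i ω - n * p i) ^ 2 / (n * p i)

/-- `S_{n2} = ∑_{i=1}^{k} (o_i - n p_i) / (n p_i)`. -/
noncomputable def S2stat {Ω : Type*} (n kn : ℕ) (p : ℕ → ℝ) (X : ℕ → Ω → ℕ) (ω : Ω) : ℝ :=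
  ∑ i ∈ Finset.Icc 1 kn, (obsCount n X i ω - n * p i) / (n * p i)

/-- `S_{n1} = 𝒳²_n - S_{n2}`. -/
noncomputable def S1stat {Ω : Type*} (n kn : ℕ) (p : ℕ → ℝ) (X : ℕ → Ω → ℕ) (ω : Ω) : ℝ :=
  chiSqStat n kn p X ω - S2stat n kn p X ω

/-- `σ_{n1}² = 2(k_n - 1)(n - 1)/n`. -/
noncomputable def sigma1sq (n kn : ℕ) : ℝ :=
  2 * ((kn : ℝ) - 1) * ((n : ℝ) - 1) / (n : ℝ)

/-- `σ_{n2}² = (1/n)(∑_{i=1}^{k} 1/p_i - k²)`. -/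
noncomputable def sigma2sq (n kn : ℕ) (p : ℕ → ℝ) : ℝ :=
  (1 / (n : ℝ)) * (∑ i ∈ Finset.Icc 1 kn, 1 / p i - (kn : ℝ) ^ 2)

/-! Writing `o_i` as the sum of the indicators of `{X_j = i}`, pairwise independence gives
`E o_i = n p'_i` and `E o_i² = n p'_i + n (n - 1) p'_i²`, hence
`E (o_i - e_i)² / e_i = (p'_i (1 - p'_i) + n (p'_i - p_i)²) / p_i` and `E (o_i - e_i) / e_i =
(p'_i - p_i) / p_i`. Since `∑ p_i = ∑ p'_i = 1`,
`∑ (p'_i (1 - p'_i) - (p'_i - p_i)) / p_i = ∑ (p_i - p'_i²) / p_i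
= k - 1 - ∑ (p'_i - p_i)² / p_i`. -/

section Counts

variable {Ω : Type*}

theorem obsCount_eq_sum_indicator (n : ℕ) (X : ℕ → Ω → ℕ) (i : ℕ) :
    obsCount n X i = fun ω => ∑ j ∈ range n, (X j ⁻¹' {i}).indicator 1 ω := by
  ext ω
  rw [obsCount, natCast_card_filter]
  exact sum_congr rfl fun j _ => by by_cases h : X j ω = i <;> simp [h]

theorem obsCount_sq_eq_sum_indicator_inter (n : ℕ) (X : ℕ → Ω → ℕ) (i : ℕ) :
    (fun ω => obsCount n X i ω ^ 2) = fun ω =>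
      ∑ j ∈ range n, ∑ l ∈ range n, (X j ⁻¹' {i} ∩ X l ⁻¹' {i}).indicator 1 ω := by
  simp only [obsCount_eq_sum_indicator, sq, sum_mul_sum, Set.inter_indicator_one,
    Pi.mul_apply]

variable [MeasurableSpace Ω] {P : Measure Ω} {n : ℕ} {X : ℕ → Ω → ℕ} {i : ℕ} {q : ℝ}

theorem measureReal_preimage_inter_preimage_eq
    (hindep : ∀ j < n, ∀ l < n, j ≠ l → IndepFun (X j) (X l) P)
    (hq : ∀ j < n, P.real (X j ⁻¹' {i}) = q) {j l : ℕ} (hj : j < n) (hl : l < n) :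
    P.real (X j ⁻¹' {i} ∩ X l ⁻¹' {i}) = q ^ 2 + if j = l then q - q ^ 2 else 0 := by
  split_ifs with hjl
  · subst hjl
    rw [Set.inter_self, hq j hj]
    ring
  · rw [measureReal_def, (hindep j hj l hl hjl).measure_inter_preimage_eq_mul _ _
      (measurableSet_singleton i) (measurableSet_singleton i), ENNReal.toReal_mul,
      ← measureReal_def, ← measureReal_def, hq j hj, hq l hl]
    ring

section Finite

variable [IsFiniteMeasure P]

theorem memLp_obsCount (hX : ∀ j, Measurable (X j)) (r : ENNReal) :
    MemLp (obsCount n X i) r P := by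
  rw [obsCount_eq_sum_indicator]
  exact memLp_finsetSum _ fun j _ =>
    memLp_indicator_const r (hX j (measurableSet_singleton i)) 1 (Or.inr (measure_ne_top _ _))

theorem integral_obsCount (hX : ∀ j, Measurable (X j)) :
    ∫ ω, obsCount n X i ω ∂P = ∑ j ∈ range n, P.real (X j ⁻¹' {i}) := by
  have hA : ∀ j, MeasurableSet (X j ⁻¹' {i}) := fun j => hX j (measurableSet_singleton i)
  rw [obsCount_eq_sum_indicator, integral_finsetSum _
    fun j _ => (integrable_const 1).indicator (hA j)]
  simp only [integral_indicator_one (hA _)]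

theorem integral_obsCount_sq (hX : ∀ j, Measurable (X j)) :
    ∫ ω, obsCount n X i ω ^ 2 ∂P =
      ∑ j ∈ range n, ∑ l ∈ range n, P.real (X j ⁻¹' {i} ∩ X l ⁻¹' {i}) := by
  have hA : ∀ j l, MeasurableSet (X j ⁻¹' {i} ∩ X l ⁻¹' {i}) := fun j l =>
    (hX j (measurableSet_singleton i)).inter (hX l (measurableSet_singleton i))
  rw [obsCount_sq_eq_sum_indicator_inter, integral_finsetSum _ fun j _ =>
    integrable_finsetSum _ fun l _ => (integrable_const 1).indicator (hA j l)]
  refine sum_congr rfl fun j _ => ?_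
  rw [integral_finsetSum _ fun l _ => (integrable_const 1).indicator (hA j l)]
  simp only [integral_indicator_one (hA j _)]

theorem integral_obsCount_eq_mul (hX : ∀ j, Measurable (X j))
    (hq : ∀ j < n, P.real (X j ⁻¹' {i}) = q) :
    ∫ ω, obsCount n X i ω ∂P = n * q := by
  rw [integral_obsCount hX, sum_congr rfl fun j hj => hq j (mem_range.1 hj), sum_const,
    card_range, nsmul_eq_mul]

theorem integral_obsCount_sq_eq (hX : ∀ j, Measurable (X j))
    (hindep : ∀ j < n, ∀ l < n, j ≠ l → IndepFun (X j) (X l) P)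
    (hq : ∀ j < n, P.real (X j ⁻¹' {i}) = q) :
    ∫ ω, obsCount n X i ω ^ 2 ∂P = n * q + n * (n - 1) * q ^ 2 := by
  rw [integral_obsCount_sq hX]
  calc _ = ∑ j ∈ range n, ∑ l ∈ range n, (q ^ 2 + if j = l then q - q ^ 2 else 0) :=
        sum_congr rfl fun j hj => sum_congr rfl fun l hl =>
          measureReal_preimage_inter_preimage_eq hindep hq (mem_range.1 hj) (mem_range.1 hl)
    _ = _ := by
      simp only [sum_add_distrib, sum_ite_eq, sum_const, card_range, nsmul_eq_mul]
      rw [sum_ite_of_true fun _ hj => hj, sum_const, card_range, nsmul_eq_mul]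
      ring

end Finite

variable [IsProbabilityMeasure P]

theorem integral_sub_const_sq {f : Ω → ℝ} (hf : MemLp f 2 P) (c : ℝ) :
    ∫ ω, (f ω - c) ^ 2 ∂P = ∫ ω, f ω ^ 2 ∂P - 2 * c * ∫ ω, f ω ∂P + c ^ 2 := by
  have hsq : Integrable (fun ω => f ω ^ 2) P := hf.integrable_sq
  have hlin : Integrable (fun ω => 2 * c * f ω) P := (hf.integrable one_le_two).const_mul _
  have hdiff : Integrable (fun ω => f ω ^ 2 - 2 * c * f ω) P := hsq.sub hlin
  calc ∫ ω, (f ω - c) ^ 2 ∂P = ∫ ω, (f ω ^ 2 - 2 * c * f ω) + c ^ 2 ∂P := by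
        congr 1; ext ω; ring
    _ = _ := by
      rw [integral_add hdiff (integrable_const _), integral_sub hsq hlin, integral_const_mul,
        integral_const, probReal_univ, one_smul]

theorem integral_obsCount_sub_sq (hX : ∀ j, Measurable (X j))
    (hindep : ∀ j < n, ∀ l < n, j ≠ l → IndepFun (X j) (X l) P)
    (hq : ∀ j < n, P.real (X j ⁻¹' {i}) = q) (c : ℝ) :
    ∫ ω, (obsCount n X i ω - c) ^ 2 ∂P = n * q * (1 - q) + (n * q - c) ^ 2 := by
  rw [integral_sub_const_sq (memLp_obsCount hX 2), integral_obsCount_sq_eq hX hindep hq,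
    integral_obsCount_eq_mul hX hq]
  ring

end Counts

section Statistics

variable {Ω : Type*} [MeasurableSpace Ω] {P : Measure Ω} {n k : ℕ} {p q : ℕ → ℝ}
  {X : ℕ → Ω → ℕ}

theorem integrable_chiSqStat [IsFiniteMeasure P] (hX : ∀ j, Measurable (X j)) :
    Integrable (chiSqStat n k p X) P :=
  integrable_finsetSum _ fun _ _ =>
    ((memLp_obsCount hX 2).sub (memLp_const _)).integrable_sq.div_const _

theorem integrable_S2stat [IsFiniteMeasure P] (hX : ∀ j, Measurable (X j)) :
    Integrable (S2stat n k p X) P :=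
  integrable_finsetSum _ fun _ _ =>
    (((memLp_obsCount hX 1).integrable le_rfl).sub (integrable_const _)).div_const _

variable [IsProbabilityMeasure P]

theorem integral_chiSqStat (hn : (n : ℝ) ≠ 0) (hX : ∀ j, Measurable (X j))
    (hindep : ∀ j < n, ∀ l < n, j ≠ l → IndepFun (X j) (X l) P)
    (hq : ∀ i ∈ Icc 1 k, ∀ j < n, P.real (X j ⁻¹' {i}) = q i) :
    ∫ ω, chiSqStat n k p X ω ∂P =
      ∑ i ∈ Icc 1 k, (q i * (1 - q i) + n * (q i - p i) ^ 2) / p i := by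
  unfold chiSqStat
  rw [integral_finsetSum]
  swap
  · exact fun _ _ => ((memLp_obsCount hX 2).sub (memLp_const _)).integrable_sq.div_const _
  refine sum_congr rfl fun i hi => ?_
  rw [integral_div, integral_obsCount_sub_sq hX hindep (hq i hi),
    show n * q i * (1 - q i) + (n * q i - n * p i) ^ 2
      = n * (q i * (1 - q i) + n * (q i - p i) ^ 2) by ring, mul_div_mul_left _ _ hn]

theorem integral_S2stat (hn : (n : ℝ) ≠ 0) (hX : ∀ j, Measurable (X j))
    (hq : ∀ i ∈ Icc 1 k, ∀ j < n, P.real (X j ⁻¹' {i}) = q i) :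
    ∫ ω, S2stat n k p X ω ∂P = ∑ i ∈ Icc 1 k, (q i - p i) / p i := by
  unfold S2stat
  rw [integral_finsetSum]
  swap
  · exact fun _ _ =>
      (((memLp_obsCount hX 1).integrable le_rfl).sub (integrable_const _)).div_const _
  refine sum_congr rfl fun i hi => ?_
  rw [integral_div,
    integral_sub ((memLp_obsCount hX 1).integrable le_rfl) (integrable_const _),
    integral_obsCount_eq_mul hX (hq i hi), integral_const, probReal_univ, one_smul,
    ← mul_sub, mul_div_mul_left _ _ hn]

end Statistics

theorem sum_div_sub_sum_div_eq {ι : Type*} (s : Finset ι) {p q : ι → ℝ}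
    (hp : ∀ i ∈ s, p i ≠ 0) (hp_sum : ∑ i ∈ s, p i = 1) (hq_sum : ∑ i ∈ s, q i = 1) (m : ℝ) :
    ∑ i ∈ s, (q i * (1 - q i) + m * (q i - p i) ^ 2) / p i - ∑ i ∈ s, (q i - p i) / p i =
      (#s - 1) + (m - 1) * ∑ i ∈ s, (q i - p i) ^ 2 / p i := by
  rw [← sum_sub_distrib]
  calc _ = ∑ i ∈ s, ((m - 1) * ((q i - p i) ^ 2 / p i) + (1 + p i - 2 * q i)) :=
        sum_congr rfl fun i hi => by field_simp [hp i hi]; ring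
    _ = _ := by
      rw [sum_add_distrib, ← mul_sum, sum_sub_distrib, sum_add_distrib, ← mul_sum, hp_sum,
        hq_sum, sum_const, nsmul_one]
      ring

theorem S1_S2_mean_under_alternative_general
    {Ω : Type*} [MeasurableSpace Ω] (P : Measure Ω) [IsProbabilityMeasure P]
    (n k : ℕ) (hn : 1 ≤ n)
    (p p' : ℕ → ℝ)
    (hp_pos : ∀ i ∈ Finset.Icc 1 k, 0 < p i)
    (hp_sum : ∑ i ∈ Finset.Icc 1 k, p i = 1)
    (hp'_nonneg : ∀ i ∈ Finset.Icc 1 k, 0 ≤ p' i)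
    (hp'_sum : ∑ i ∈ Finset.Icc 1 k, p' i = 1)
    (X : ℕ → Ω → ℕ)
    (hX_meas : ∀ j, Measurable (X j))
    (hX_indep : iIndepFun (m := fun _ : Fin n => (inferInstance : MeasurableSpace ℕ))
      (fun j : Fin n => X j.1) P)
    (hX_dist : ∀ j < n, ∀ i ∈ Finset.Icc 1 k,
      P {ω | X j ω = i} = ENNReal.ofReal (p' i)) :
    (∫ ω, S1stat n k p X ω ∂P) - ((k : ℝ) - 1) =
        ((n : ℝ) - 1) * ∑ i ∈ Finset.Icc 1 k, (p' i - p i) ^ 2 / p i ∧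
    (∫ ω, S2stat n k p X ω ∂P) = ∑ i ∈ Finset.Icc 1 k, (p' i - p i) / p i ∧
    ((∀ i ∈ Finset.Icc 1 k, p' i = p i) →
      (∫ ω, S1stat n k p X ω ∂P) = (k : ℝ) - 1 ∧ (∫ ω, S2stat n k p X ω ∂P) = 0) := by
  have hn0 : (n : ℝ) ≠ 0 := Nat.cast_ne_zero.2 (by omega)
  have hq : ∀ i ∈ Icc 1 k, ∀ j < n, P.real (X j ⁻¹' {i}) = p' i := fun i hi j hj =>
    (congrArg ENNReal.toReal (hX_dist j hj i hi)).trans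
      (ENNReal.toReal_ofReal (hp'_nonneg i hi))
  have hindep : ∀ j < n, ∀ l < n, j ≠ l → IndepFun (X j) (X l) P := fun j hj l hl hjl =>
    hX_indep.indepFun (i := ⟨j, hj⟩) (j := ⟨l, hl⟩) (by simpa [Fin.ext_iff] using hjl)
  have hS2 := integral_S2stat (p := p) hn0 hX_meas hq
  have hS1 : ∫ ω, S1stat n k p X ω ∂P =
      (k - 1) + (n - 1) * ∑ i ∈ Icc 1 k, (p' i - p i) ^ 2 / p i := by
    unfold S1stat
    rw [integral_sub (integrable_chiSqStat hX_meas) (integrable_S2stat hX_meas),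
      integral_chiSqStat hn0 hX_meas hindep hq, hS2,
      sum_div_sub_sum_div_eq _ (fun i hi => (hp_pos i hi).ne') hp_sum hp'_sum, Nat.card_Icc,
      Nat.add_sub_cancel]
  refine ⟨by rw [hS1]; ring, hS2, fun hpp => ?_⟩
  have hsq : ∑ i ∈ Icc 1 k, (p' i - p i) ^ 2 / p i = 0 :=
    sum_eq_zero fun i hi => by simp [hpp i hi]
  have hlin : ∑ i ∈ Icc 1 k, (p' i - p i) / p i = 0 :=
    sum_eq_zero fun i hi => by simp [hpp i hi]
  exact ⟨by rw [hS1, hsq]; ring, by rw [hS2, hlin]⟩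

theorem S1_S2_mean_under_alternative
    {Ω : Type*} [MeasurableSpace Ω] (P : Measure Ω) [IsProbabilityMeasure P]
    (n k : ℕ) (hn : 1 ≤ n) (hk : 2 ≤ k)
    (p p' : ℕ → ℝ)
    (hp_pos : ∀ i ∈ Finset.Icc 1 k, 0 < p i)
    (hp_sum : ∑ i ∈ Finset.Icc 1 k, p i = 1)
    (hp'_nonneg : ∀ i ∈ Finset.Icc 1 k, 0 ≤ p' i)
    (hp'_sum : ∑ i ∈ Finset.Icc 1 k, p' i = 1)
    (X : ℕ → Ω → ℕ)
    (hX_meas : ∀ j, Measurable (X j))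
    (hX_range : ∀ j < n, ∀ ω, X j ω ∈ Finset.Icc 1 k)
    (hX_indep : iIndepFun (m := fun _ : Fin n => (inferInstance : MeasurableSpace ℕ))
      (fun j : Fin n => X j.1) P)
    (hX_dist : ∀ j < n, ∀ i ∈ Finset.Icc 1 k,
      P {ω | X j ω = i} = ENNReal.ofReal (p' i)) :
    (∫ ω, S1stat n k p X ω ∂P) - ((k : ℝ) - 1) =
        ((n : ℝ) - 1) * ∑ i ∈ Finset.Icc 1 k, (p' i - p i) ^ 2 / p i ∧
    (∫ ω, S2stat n k p X ω ∂P) = ∑ i ∈ Finset.Icc 1 k, (p' i - p i) / p i ∧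
    ((∀ i ∈ Finset.Icc 1 k, p' i = p i) →
      (∫ ω, S1stat n k p X ω ∂P) = (k : ℝ) - 1 ∧ (∫ ω, S2stat n k p X ω ∂P) = 0) :=
  S1_S2_mean_under_alternative_general P n k hn p p' hp_pos hp_sum hp'_nonneg hp'_sum X hX_meas
    hX_indep hX_dist
end

section
/- Under the null hypothesis P(X_j = i) = p_i, the statistic S_{n1} satisfies E[S_{n1}] = k − 1 and Var(S_{n1}) = 2(k − 1)(n − 1)/n. -/
open MeasureTheory ProbabilityTheory Finset

/-!
Expanding the squares, `S_{n1} = k - n + U / n` with the U-statistic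
`U = ∑_{j ≠ l} g(X_j, X_l)`, `g(x, y) = 𝟙{x = y} / p_x`. The kernel is degenerate:
`𝔼[g(X_a, X_b) F] = 𝔼[F]` whenever `F` does not depend on `X_b`. Hence `𝔼[g(X_a, X_b)] = 1`,
and `𝔼[g_q g_{q'}] = 1` unless `q' ∈ {q, q.swap}`, where it is `𝔼[g(X_a, X_b)²] = k`.
So `𝔼 U = n(n-1)` and `Var U = 2(k-1) n(n-1)`.
-/

theorem Finset.sq_sum_sub_sum_eq_sum_offDiag {ι R : Type*} [CommRing R] [DecidableEq ι]
    (s : Finset ι) {f : ι → R} (hf : ∀ j ∈ s, f j * f j = f j) :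
    (∑ j ∈ s, f j) ^ 2 - ∑ j ∈ s, f j = ∑ q ∈ s.offDiag, f q.1 * f q.2 := by
  rw [sq, sum_mul_sum, ← sum_product', ← diag_union_offDiag,
    sum_union (disjoint_diag_offDiag s), sum_diag, sum_congr rfl hf, add_sub_cancel_left]

theorem Finset.sum_offDiag_ite_eq_or_swap {ι R : Type*} [DecidableEq ι] [CommRing R]
    {s : Finset ι} {q : ι × ι} (hq : q ∈ s.offDiag) (x y : R) :
    ∑ q' ∈ s.offDiag, (if q' = q ∨ q' = q.swap then x else y) = #s.offDiag * y + 2 * (x - y) := by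
  obtain ⟨h1, h2, h12⟩ := mem_offDiag.1 hq
  have hswap : q.swap ∈ s.offDiag := mem_offDiag.2 ⟨h2, h1, Ne.symm h12⟩
  have hne : q ≠ q.swap := fun h => h12 (congrArg Prod.fst h)
  have hsplit : ∀ q' ∈ s.offDiag, (if q' = q ∨ q' = q.swap then x else y)
      = y + if q' = q ∨ q' = q.swap then x - y else 0 := fun q' _ => by split_ifs <;> ring
  rw [sum_congr rfl hsplit, sum_add_distrib, ← sum_filter, filter_or, filter_eq', filter_eq',
    if_pos hq, if_pos hswap, ← insert_eq, sum_pair hne, sum_const, nsmul_eq_mul]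
  ring

theorem Finset.cast_card_offDiag_range (n : ℕ) : (#(range n).offDiag : ℝ) = n * (n - 1) := by
  rw [offDiag_card, card_range, Nat.cast_sub (Nat.le_mul_self n), Nat.cast_mul]
  ring

theorem integral_mul_eq_mul_integral_of_iIndepFun {Ω ι β : Type*} [MeasurableSpace Ω]
    [MeasurableSpace β] {P : Measure Ω} {Y : ι → Ω → β}
    (hY_meas : ∀ j, Measurable (Y j)) (hY : iIndepFun Y P) (b : ι) {f F : Ω → ℝ}
    (hf : Measurable[MeasurableSpace.comap (Y b) inferInstance] f)
    (hF : Measurable[⨆ j ∈ ({b}ᶜ : Set ι), MeasurableSpace.comap (Y j) inferInstance] F) :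
    ∫ ω, f ω * F ω ∂P = (∫ ω, f ω ∂P) * ∫ ω, F ω ∂P := by
  have hind := indep_iSup_of_disjoint (fun j => (hY_meas j).comap_le) hY.iIndep
    (disjoint_compl_right (a := ({b} : Set ι)))
  rw [_root_.iSup_singleton] at hind
  have hfF : IndepFun f F P :=
    (IndepFun_iff_Indep f F P).2 (indep_of_indep_of_le hind hf.comap_le hF.comap_le)
  exact hfF.integral_mul_eq_mul_integral
    (hf.mono (hY_meas b).comap_le le_rfl).aestronglyMeasurable
    (hF.mono (iSup₂_le fun j _ => (hY_meas j).comap_le) le_rfl).aestronglyMeasurable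

section

variable {Ω : Type*}

noncomputable def cellInd (X : ℕ → Ω → ℕ) (j i : ℕ) : Ω → ℝ := (X j ⁻¹' {i}).indicator 1

noncomputable def matchKernel (k : ℕ) (p : ℕ → ℝ) (X : ℕ → Ω → ℕ) (a b : ℕ) (ω : Ω) : ℝ :=
  ∑ i ∈ Icc 1 k, cellInd X a i ω * cellInd X b i ω / p i

noncomputable def matchUStat (n k : ℕ) (p : ℕ → ℝ) (X : ℕ → Ω → ℕ) (ω : Ω) : ℝ :=
  ∑ q ∈ (range n).offDiag, matchKernel k p X q.1 q.2 ω

variable {n k : ℕ} {p : ℕ → ℝ} {X : ℕ → Ω → ℕ}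

@[simp]
theorem cellInd_apply (j i : ℕ) (ω : Ω) : cellInd X j i ω = if X j ω = i then 1 else 0 := by
  simp [cellInd, Set.indicator]

theorem cellInd_mul_self (j i : ℕ) (ω : Ω) :
    cellInd X j i ω * cellInd X j i ω = cellInd X j i ω := by
  simp only [cellInd_apply]; split_ifs <;> norm_num

theorem abs_cellInd_le_one (j i : ℕ) (ω : Ω) : |cellInd X j i ω| ≤ 1 := by
  simp only [cellInd_apply]; split_ifs <;> norm_num

theorem sum_cellInd_eq_one {j : ℕ} {ω : Ω} (h : X j ω ∈ Icc 1 k) :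
    ∑ i ∈ Icc 1 k, cellInd X j i ω = 1 := by
  simp [Finset.sum_ite_eq, h]

theorem obsCount_eq_sum_cellInd (i : ℕ) (ω : Ω) :
    obsCount n X i ω = ∑ j ∈ range n, cellInd X j i ω := by
  simp only [obsCount, natCast_card_filter, cellInd_apply]

theorem measurable_cellInd {m : MeasurableSpace Ω} {j : ℕ}
    (h : MeasurableSpace.comap (X j) inferInstance ≤ m) (i : ℕ) : Measurable[m] (cellInd X j i) :=
  measurable_const.indicator (h _ ⟨{i}, measurableSet_singleton i, rfl⟩)

theorem matchKernel_comm (a b : ℕ) : matchKernel k p X a b = matchKernel k p X b a :=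
  funext fun ω => sum_congr rfl fun i _ => by rw [mul_comm (cellInd X a i ω)]

theorem measurable_matchKernel {m : MeasurableSpace Ω} {a b : ℕ}
    (ha : MeasurableSpace.comap (X a) inferInstance ≤ m)
    (hb : MeasurableSpace.comap (X b) inferInstance ≤ m) :
    Measurable[m] (matchKernel k p X a b) :=
  Finset.measurable_sum _ fun i _ =>
    ((measurable_cellInd ha i).mul (measurable_cellInd hb i)).div_const _

theorem abs_matchKernel_le (hp : ∀ i ∈ Icc 1 k, 0 < p i) (a b : ℕ) (ω : Ω) :
    |matchKernel k p X a b ω| ≤ ∑ i ∈ Icc 1 k, (p i)⁻¹ := by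
  refine (abs_sum_le_sum_abs _ _).trans (sum_le_sum fun i hi => ?_)
  rw [abs_div, abs_mul, abs_of_pos (hp i hi), ← one_div]
  exact div_le_div_of_nonneg_right
    (mul_le_one₀ (abs_cellInd_le_one a i ω) (abs_nonneg _) (abs_cellInd_le_one b i ω)) (hp i hi).le

theorem cellInd_mul_cellInd_mul_matchKernel {i : ℕ}
    (hi : i ∈ Icc 1 k) (a b : ℕ) (ω : Ω) :
    cellInd X a i ω * cellInd X b i ω * matchKernel k p X a b ω
      = cellInd X a i ω * cellInd X b i ω / p i := by
  by_cases h : X a ω = i ∧ X b ω = i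
  · simp only [matchKernel, cellInd_apply, h, if_true, mul_one]
    rw [sum_eq_single_of_mem i hi fun i' _ hi' => by simp [Ne.symm hi']]
    simp
  · rcases not_and_or.1 h with h | h <;> simp [h]

theorem matchKernel_mul_self (a b : ℕ) (ω : Ω) :
    matchKernel k p X a b ω * matchKernel k p X a b ω
      = ∑ i ∈ Icc 1 k, cellInd X a i ω * cellInd X b i ω / p i ^ 2 := by
  rw [matchKernel, sum_mul]
  refine sum_congr rfl fun i hi => ?_
  rw [div_mul_eq_mul_div, ← matchKernel, cellInd_mul_cellInd_mul_matchKernel hi, sq,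
    div_div]

theorem S1stat_eq (hn : n ≠ 0) (hp : ∀ i ∈ Icc 1 k, 0 < p i) (hp_sum : ∑ i ∈ Icc 1 k, p i = 1)
    (hX : ∀ j < n, ∀ ω, X j ω ∈ Icc 1 k) (ω : Ω) :
    S1stat n k p X ω = k - n + (n : ℝ)⁻¹ * matchUStat n k p X ω := by
  have hsum : ∑ i ∈ Icc 1 k, obsCount n X i ω = n := by
    simp_rw [obsCount_eq_sum_cellInd]
    rw [sum_comm, sum_congr rfl fun j hj => sum_cellInd_eq_one (hX j (mem_range.1 hj) ω)]
    simp
  have hpair (i : ℕ) : obsCount n X i ω ^ 2 - obsCount n X i ω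
      = ∑ q ∈ (range n).offDiag, cellInd X q.1 i ω * cellInd X q.2 i ω := by
    rw [obsCount_eq_sum_cellInd]
    exact sq_sum_sub_sum_eq_sum_offDiag _ fun j _ => cellInd_mul_self j i ω
  have hterm : ∀ i ∈ Icc 1 k,
      (obsCount n X i ω - n * p i) ^ 2 / (n * p i) - (obsCount n X i ω - n * p i) / (n * p i)
        = (n : ℝ)⁻¹ * ((obsCount n X i ω ^ 2 - obsCount n X i ω) / p i)
          - 2 * obsCount n X i ω + (n * p i + 1) := by
    intro i hi
    have := hp i hi
    field_simp
    ring
  have hU : ∑ i ∈ Icc 1 k, (obsCount n X i ω ^ 2 - obsCount n X i ω) / p i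
      = matchUStat n k p X ω := by
    simp_rw [hpair, sum_div]
    exact sum_comm
  rw [S1stat, chiSqStat, S2stat, ← sum_sub_distrib, sum_congr rfl hterm, sum_add_distrib,
    sum_sub_distrib, ← mul_sum, ← mul_sum, hsum, hU, sum_add_distrib, ← mul_sum, hp_sum,
    sum_const, Nat.card_Icc]
  push_cast
  ring

abbrev sigmaExcept (n : ℕ) (X : ℕ → Ω → ℕ) (b : ℕ) : MeasurableSpace Ω :=
  ⨆ j ∈ (range n).erase b, MeasurableSpace.comap (X j) inferInstance

theorem comap_le_sigmaExcept {a b : ℕ} (hab : a ≠ b) (ha : a < n) :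
    MeasurableSpace.comap (X a) inferInstance ≤ sigmaExcept n X b :=
  le_iSup₂_of_le a (mem_erase.2 ⟨hab, mem_range.2 ha⟩) le_rfl

variable [MeasurableSpace Ω]

structure IsCategoricalSample (P : Measure Ω) (n k : ℕ) (p : ℕ → ℝ) (X : ℕ → Ω → ℕ) :
    Prop where
  pos : ∀ i ∈ Icc 1 k, 0 < p i
  measurable : ∀ j, Measurable (X j)
  mem_Icc : ∀ j < n, ∀ ω, X j ω ∈ Icc 1 k
  indep : iIndepFun (m := fun _ : Fin n => (inferInstance : MeasurableSpace ℕ))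
    (fun j : Fin n => X j.1) P
  measure_eq : ∀ j < n, ∀ i ∈ Icc 1 k, P {ω | X j ω = i} = ENNReal.ofReal (p i)

variable {P : Measure Ω}

namespace IsCategoricalSample

theorem integrable_cellInd [IsFiniteMeasure P] (hX : IsCategoricalSample P n k p X)
    (j i : ℕ) : Integrable (cellInd X j i) P :=
  (integrable_const 1).indicator (hX.measurable j (measurableSet_singleton i))

theorem integrable_cellInd_mul (hX : IsCategoricalSample P n k p X) {F : Ω → ℝ}
    (hF : Integrable F P) (j i : ℕ) : Integrable (fun ω => cellInd X j i ω * F ω) P :=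
  hF.bdd_mul (measurable_cellInd (hX.measurable j).comap_le i).aestronglyMeasurable
    (ae_of_all _ fun ω => abs_cellInd_le_one j i ω)

theorem memLp_matchKernel (hX : IsCategoricalSample P n k p X) (a b : ℕ) :
    MemLp (matchKernel k p X a b) ⊤ P :=
  memLp_top_of_bound (measurable_matchKernel (hX.measurable a).comap_le
      (hX.measurable b).comap_le).aestronglyMeasurable
    _ (ae_of_all _ fun ω => abs_matchKernel_le hX.pos a b ω)

theorem memLp_matchUStat (hX : IsCategoricalSample P n k p X) :
    MemLp (matchUStat n k p X) ⊤ P :=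
  memLp_finsetSum _ fun q _ => hX.memLp_matchKernel q.1 q.2

theorem integral_cellInd (hX : IsCategoricalSample P n k p X) {j i : ℕ} (hj : j < n)
    (hi : i ∈ Icc 1 k) : ∫ ω, cellInd X j i ω ∂P = p i := by
  rw [cellInd, integral_indicator_one (hX.measurable j (measurableSet_singleton i)),
    measureReal_def, ← ENNReal.toReal_ofReal (hX.pos i hi).le, ← hX.measure_eq j hj i hi]
  rfl

theorem integral_cellInd_mul (hX : IsCategoricalSample P n k p X) {b i : ℕ} (hb : b < n)
    (hi : i ∈ Icc 1 k) {F : Ω → ℝ} (hF : Measurable[sigmaExcept n X b] F) :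
    ∫ ω, cellInd X b i ω * F ω ∂P = p i * ∫ ω, F ω ∂P := by
  have hle : sigmaExcept n X b ≤ ⨆ j ∈ ({⟨b, hb⟩}ᶜ : Set (Fin n)),
      MeasurableSpace.comap (X j) inferInstance := by
    refine iSup₂_le fun j hj => le_iSup₂_of_le (⟨j, mem_range.1 (mem_of_mem_erase hj)⟩ : Fin n)
      ?_ le_rfl
    simpa [Fin.ext_iff] using ne_of_mem_erase hj
  rw [integral_mul_eq_mul_integral_of_iIndepFun (Y := fun j : Fin n => X j)
    (fun j => hX.measurable j) hX.indep (⟨b, hb⟩ : Fin n)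
    (measurable_cellInd le_rfl i) (hF.mono hle le_rfl), hX.integral_cellInd hb hi]

theorem integral_matchKernel_mul (hX : IsCategoricalSample P n k p X) {a b : ℕ} (hab : a ≠ b)
    (ha : a < n) (hb : b < n) {F : Ω → ℝ} (hF : Measurable[sigmaExcept n X b] F)
    (hFi : Integrable F P) :
    ∫ ω, matchKernel k p X a b ω * F ω ∂P = ∫ ω, F ω ∂P := by
  have hF_a (i : ℕ) : Measurable[sigmaExcept n X b] fun ω => cellInd X a i ω * F ω :=
    (measurable_cellInd (comap_le_sigmaExcept hab ha) i).mul hF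
  calc ∫ ω, matchKernel k p X a b ω * F ω ∂P
      = ∫ ω, ∑ i ∈ Icc 1 k, (p i)⁻¹ * (cellInd X b i ω * (cellInd X a i ω * F ω)) ∂P := by
        refine integral_congr_ae (ae_of_all _ fun ω => ?_)
        simp only [matchKernel, sum_mul]
        exact sum_congr rfl fun i _ => by ring
    _ = ∑ i ∈ Icc 1 k, ∫ ω, cellInd X a i ω * F ω ∂P := by
        rw [integral_finsetSum _ fun i _ =>
          ((hX.integrable_cellInd_mul (hX.integrable_cellInd_mul hFi a i) b i).const_mul _)]
        refine sum_congr rfl fun i hi => ?_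
        rw [integral_const_mul, hX.integral_cellInd_mul hb hi (hF_a i),
          inv_mul_cancel_left₀ (hX.pos i hi).ne']
    _ = ∫ ω, F ω ∂P := by
        rw [← integral_finsetSum _ fun i _ => hX.integrable_cellInd_mul hFi a i]
        refine integral_congr_ae (ae_of_all _ fun ω => ?_)
        dsimp only
        rw [← sum_mul, sum_cellInd_eq_one (hX.mem_Icc a ha ω), one_mul]

theorem integral_matchKernel [IsProbabilityMeasure P] (hX : IsCategoricalSample P n k p X)
    {a b : ℕ} (hab : a ≠ b) (ha : a < n) (hb : b < n) :
    ∫ ω, matchKernel k p X a b ω ∂P = 1 := by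
  simpa using hX.integral_matchKernel_mul hab ha hb (F := fun _ => 1) measurable_const
    (integrable_const 1)

theorem integral_matchKernel_mul_self [IsFiniteMeasure P] (hX : IsCategoricalSample P n k p X)
    {a b : ℕ} (hab : a ≠ b) (ha : a < n) (hb : b < n) :
    ∫ ω, matchKernel k p X a b ω * matchKernel k p X a b ω ∂P = k := by
  simp_rw [matchKernel_mul_self]
  rw [integral_finsetSum _ fun i _ =>
    (hX.integrable_cellInd_mul (hX.integrable_cellInd b i) a i).div_const _]
  have hcell : ∀ i ∈ Icc 1 k, ∫ ω, cellInd X a i ω * cellInd X b i ω / p i ^ 2 ∂P = 1 := by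
    intro i hi
    simp_rw [mul_comm (cellInd X a i _)]
    rw [integral_div, hX.integral_cellInd_mul hb hi
      (measurable_cellInd (comap_le_sigmaExcept hab ha) i), hX.integral_cellInd ha hi, ← sq,
      div_self (pow_ne_zero 2 (hX.pos i hi).ne')]
  rw [sum_congr rfl hcell]
  simp

theorem integral_matchKernel_mul_matchKernel_of_ne [IsProbabilityMeasure P]
    (hX : IsCategoricalSample P n k p X) {a b c d : ℕ} (hab : a ≠ b) (hcd : c ≠ d)
    (ha : a < n) (hb : b < n) (hc : c < n) (hd : d < n) (hbc : b ≠ c) (hbd : b ≠ d) :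
    ∫ ω, matchKernel k p X a b ω * matchKernel k p X c d ω ∂P = 1 := by
  rw [hX.integral_matchKernel_mul hab ha hb (measurable_matchKernel
      (comap_le_sigmaExcept hbc.symm hc) (comap_le_sigmaExcept hbd.symm hd))
      ((hX.memLp_matchKernel c d).integrable le_top), hX.integral_matchKernel hcd hc hd]

theorem integral_matchKernel_mul_matchKernel [IsProbabilityMeasure P]
    (hX : IsCategoricalSample P n k p X) {q q' : ℕ × ℕ} (hq : q ∈ (range n).offDiag)
    (hq' : q' ∈ (range n).offDiag) :
    ∫ ω, matchKernel k p X q.1 q.2 ω * matchKernel k p X q'.1 q'.2 ω ∂P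
      = if q' = q ∨ q' = q.swap then (k : ℝ) else 1 := by
  obtain ⟨a, b⟩ := q
  obtain ⟨c, d⟩ := q'
  simp only [mem_offDiag, mem_range] at hq hq'
  obtain ⟨ha, hb, hab⟩ := hq
  obtain ⟨hc, hd, hcd⟩ := hq'
  simp only [Prod.mk.injEq, Prod.swap_prod_mk]
  by_cases hb_free : b ≠ c ∧ b ≠ d
  · rw [if_neg (by omega)]
    exact hX.integral_matchKernel_mul_matchKernel_of_ne hab hcd ha hb hc hd hb_free.1 hb_free.2
  by_cases ha_free : a ≠ c ∧ a ≠ d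
  · rw [if_neg (by omega), matchKernel_comm a b]
    exact hX.integral_matchKernel_mul_matchKernel_of_ne hab.symm hcd hb ha hc hd
      ha_free.1 ha_free.2
  rw [if_pos (by omega)]
  obtain ⟨rfl, rfl⟩ | ⟨rfl, rfl⟩ : (c = a ∧ d = b) ∨ (c = b ∧ d = a) := by omega
  · exact hX.integral_matchKernel_mul_self hab ha hb
  · rw [matchKernel_comm c d]
    exact hX.integral_matchKernel_mul_self hab ha hb

theorem integral_matchUStat [IsProbabilityMeasure P] (hX : IsCategoricalSample P n k p X) :
    ∫ ω, matchUStat n k p X ω ∂P = n * (n - 1) := by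
  simp only [matchUStat]
  rw [integral_finsetSum _ fun q _ => (hX.memLp_matchKernel q.1 q.2).integrable le_top,
    sum_congr rfl fun q hq => by
      obtain ⟨ha, hb, hab⟩ := mem_offDiag.1 hq
      exact hX.integral_matchKernel hab (mem_range.1 ha) (mem_range.1 hb)]
  rw [sum_const, nsmul_one, cast_card_offDiag_range]

theorem integral_matchUStat_sq [IsProbabilityMeasure P] (hX : IsCategoricalSample P n k p X) :
    ∫ ω, matchUStat n k p X ω ^ 2 ∂P = n * (n - 1) * (n * (n - 1) + 2 * (k - 1)) := by
  have hint (q q' : ℕ × ℕ) :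
      Integrable (fun ω => matchKernel k p X q.1 q.2 ω * matchKernel k p X q'.1 q'.2 ω) P :=
    ((hX.memLp_matchKernel q'.1 q'.2).mul (hX.memLp_matchKernel q.1 q.2)).integrable le_top
  calc ∫ ω, matchUStat n k p X ω ^ 2 ∂P
      = ∑ q ∈ (range n).offDiag, ∑ q' ∈ (range n).offDiag,
          ∫ ω, matchKernel k p X q.1 q.2 ω * matchKernel k p X q'.1 q'.2 ω ∂P := by
        simp_rw [matchUStat, sq, sum_mul_sum]
        rw [integral_finsetSum _ fun q _ => integrable_finsetSum _ fun q' _ => hint q q']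
        exact sum_congr rfl fun q _ => integral_finsetSum _ fun q' _ => hint q q'
    _ = ∑ q ∈ (range n).offDiag, (n * (n - 1) + 2 * (k - 1) : ℝ) := by
        refine sum_congr rfl fun q hq => ?_
        rw [sum_congr rfl fun q' hq' => hX.integral_matchKernel_mul_matchKernel hq hq',
          sum_offDiag_ite_eq_or_swap hq, cast_card_offDiag_range, mul_one]
    _ = _ := by rw [sum_const, nsmul_eq_mul, cast_card_offDiag_range]

theorem variance_matchUStat [IsProbabilityMeasure P] (hX : IsCategoricalSample P n k p X) :
    Var[matchUStat n k p X; P] = 2 * (k - 1) * (n * (n - 1)) := by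
  rw [variance_eq_sub (hX.memLp_matchUStat.mono_exponent le_top)]
  simp only [Pi.pow_apply]
  rw [hX.integral_matchUStat_sq, hX.integral_matchUStat]
  ring

end IsCategoricalSample

end

theorem S1_mean_variance_null_general
    {Ω : Type*} [MeasurableSpace Ω] (P : Measure Ω) [IsProbabilityMeasure P]
    (n k : ℕ) (hn : 1 ≤ n)
    (p : ℕ → ℝ)
    (hp_pos : ∀ i ∈ Finset.Icc 1 k, 0 < p i)
    (hp_sum : ∑ i ∈ Finset.Icc 1 k, p i = 1)
    (X : ℕ → Ω → ℕ)
    (hX_meas : ∀ j, Measurable (X j))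
    (hX_range : ∀ j < n, ∀ ω, X j ω ∈ Finset.Icc 1 k)
    (hX_indep : iIndepFun (m := fun _ : Fin n => (inferInstance : MeasurableSpace ℕ))
      (fun j : Fin n => X j.1) P)
    (hX_dist : ∀ j < n, ∀ i ∈ Finset.Icc 1 k,
      P {ω | X j ω = i} = ENNReal.ofReal (p i)) :
    (∫ ω, S1stat n k p X ω ∂P) = (k : ℝ) - 1 ∧
    variance (S1stat n k p X) P = 2 * ((k : ℝ) - 1) * ((n : ℝ) - 1) / (n : ℝ) := by
  have hX : IsCategoricalSample P n k p X := ⟨hp_pos, hX_meas, hX_range, hX_indep, hX_dist⟩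
  have hn0 : (n : ℝ) ≠ 0 := Nat.cast_ne_zero.2 (by omega)
  have hS1 : S1stat n k p X = fun ω => (k - n : ℝ) + (n : ℝ)⁻¹ * matchUStat n k p X ω :=
    funext (S1stat_eq (by omega) hp_pos hp_sum hX_range)
  have hU := hX.memLp_matchUStat.integrable le_top
  constructor
  · rw [hS1, integral_add (integrable_const _) (hU.const_mul _), integral_const,
      integral_const_mul, hX.integral_matchUStat, probReal_univ, one_smul]
    field_simp
    ring
  · rw [hS1, variance_const_add (hU.aestronglyMeasurable.const_mul _), variance_const_mul,
      hX.variance_matchUStat]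
    field_simp

theorem S1_mean_variance_null
    {Ω : Type*} [MeasurableSpace Ω] (P : Measure Ω) [IsProbabilityMeasure P]
    (n k : ℕ) (hn : 1 ≤ n) (hk : 2 ≤ k)
    (p : ℕ → ℝ)
    (hp_pos : ∀ i ∈ Finset.Icc 1 k, 0 < p i)
    (hp_sum : ∑ i ∈ Finset.Icc 1 k, p i = 1)
    (X : ℕ → Ω → ℕ)
    (hX_meas : ∀ j, Measurable (X j))
    (hX_range : ∀ j < n, ∀ ω, X j ω ∈ Finset.Icc 1 k)
    (hX_indep : iIndepFun (m := fun _ : Fin n => (inferInstance : MeasurableSpace ℕ))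
      (fun j : Fin n => X j.1) P)
    (hX_dist : ∀ j < n, ∀ i ∈ Finset.Icc 1 k,
      P {ω | X j ω = i} = ENNReal.ofReal (p i)) :
    (∫ ω, S1stat n k p X ω ∂P) = (k : ℝ) - 1 ∧
    variance (S1stat n k p X) P = 2 * ((k : ℝ) - 1) * ((n : ℝ) - 1) / (n : ℝ) :=
  S1_mean_variance_null_general P n k hn p hp_pos hp_sum X hX_meas hX_range hX_indep hX_dist
end

section
/- Define δ_{i,j} = 1{X_j = i} − p_i and Δ_{i,ℓ} = ∑_{j=1}^{ℓ} δ_{i,j}. Then E[ ( ∑_{j=2}^{n} (n − j) ∑_{i=1}^{k} Δ_{i,j−1} δ_{i,j}/p_i )² ] = (k − 1) ∑_{j=2}^{n} (n − j)² (j − 1). -/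
open MeasureTheory ProbabilityTheory Finset

/-- `δ_{i,j} = 1{X_j = i} - p_i`, with the draws indexed from `0`, so that the `ℓ`-th draw
(`1 ≤ ℓ ≤ n`) corresponds to `deltaRV p X i (ℓ - 1)`. -/
noncomputable def deltaRV {Ω : Type*} (p : ℕ → ℝ) (X : ℕ → Ω → ℕ) (i j : ℕ) (ω : Ω) : ℝ :=
  (if X j ω = i then (1 : ℝ) else 0) - p i

/-- `Δ_{i,ℓ} = ∑_{j=1}^{ℓ} δ_{i,j}`: the sum of the `δ`'s over the first `ℓ` draws
(with `Δ_{i,0} = 0`). -/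
noncomputable def DeltaRV {Ω : Type*} (p : ℕ → ℝ) (X : ℕ → Ω → ℕ) (i l : ℕ) (ω : Ω) : ℝ :=
  ∑ j ∈ Finset.range l, deltaRV p X i j ω

/-!
The weighted sum is `∑_j (n - j) Y_{j-1}` with martingale increments
`Y_b = ∑_i Δ_{i,b} δ_{i,b+1} / p_i`. Expanding in the centred indicators `δ`, a moment
`E[δ_{i,m} δ_{i,b} δ_{i',m'} δ_{i',b'}]` with `m < b`, `m' < b'` vanishes unless
`(m, b) = (m', b')`: otherwise some draw occurs in a single factor, which independence splits off
with mean zero. On the diagonal it is the square of the covariance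
`c_{ii'} = [i = i'] p_i - p_i p_{i'}` of one draw. Hence the increments are orthogonal with
`E[Y_b²] = b ∑_{i,i'} c_{ii'}² / (p_i p_{i'}) = b (k - 1)`, and the second moment of the weighted
sum is the Pythagorean sum of the `(n - j)² E[Y_{j-1}²]`.
-/

theorem measurable_iSup_comap_of_mem {Ω ι β : Type*} [mβ : MeasurableSpace β] {X : ι → Ω → β}
    {S : Set ι} {u : ι} (hu : u ∈ S) {g : β → ℝ} (hg : Measurable g) :
    Measurable[⨆ v ∈ S, mβ.comap (X v)] (fun ω => g (X u ω)) :=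
  (hg.comp (comap_measurable (X u))).mono
    (le_iSup₂ (f := fun v (_ : v ∈ S) => mβ.comap (X v)) u hu) le_rfl

theorem ProbabilityTheory.iIndepFun.integral_mul_comp_eq_mul {Ω ι β : Type*} [MeasurableSpace Ω]
    [mβ : MeasurableSpace β] {P : Measure Ω} {X : ι → Ω → β} (hX : iIndepFun X P)
    (hX_meas : ∀ i, Measurable (X i)) {S : Set ι} {t : ι} (ht : t ∉ S) {F : Ω → ℝ}
    (hF : Measurable[⨆ u ∈ S, mβ.comap (X u)] F) {g : β → ℝ} (hg : Measurable g) :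
    ∫ ω, F ω * g (X t ω) ∂P = (∫ ω, F ω ∂P) * ∫ ω, g (X t ω) ∂P := by
  have hle : (⨆ u ∈ S, mβ.comap (X u)) ≤ ‹MeasurableSpace Ω› :=
    iSup₂_le fun u _ => (hX_meas u).comap_le
  have hindep := indep_iSup_of_disjoint (fun i => (hX_meas i).comap_le) hX.iIndep
    (Set.disjoint_singleton_right.2 ht)
  have hgX := measurable_iSup_comap_of_mem (X := X) (Set.mem_singleton t) hg
  refine IndepFun.integral_fun_mul_eq_mul_integral ?_ (hF.mono hle le_rfl).aestronglyMeasurable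
    (hg.comp (hX_meas t)).aestronglyMeasurable
  exact (IndepFun_iff_Indep _ _ _).2 (indep_of_indep_of_le hindep hF.comap_le hgX.comap_le)

theorem integral_sq_sum_of_orthogonal {Ω ι : Type*} [MeasurableSpace Ω] {P : Measure Ω}
    (T : Finset ι) (c : ι → ℝ) {Z : ι → Ω → ℝ} (hZ : ∀ a ∈ T, MemLp (Z a) 2 P)
    (horth : ∀ a ∈ T, ∀ b ∈ T, a ≠ b → ∫ ω, Z a ω * Z b ω ∂P = 0) :
    ∫ ω, (∑ a ∈ T, c a * Z a ω) ^ 2 ∂P = ∑ a ∈ T, c a ^ 2 * ∫ ω, Z a ω ^ 2 ∂P := by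
  have hexp : ∀ ω, (∑ a ∈ T, c a * Z a ω) ^ 2
      = ∑ a ∈ T, ∑ b ∈ T, c a * c b * (Z a ω * Z b ω) := fun ω => by
    rw [sq, Finset.sum_mul_sum]
    exact Finset.sum_congr rfl fun a _ => Finset.sum_congr rfl fun b _ => by ring
  have hint : ∀ a ∈ T, ∀ b ∈ T, Integrable (fun ω => Z a ω * Z b ω) P :=
    fun a ha b hb => (hZ a ha).integrable_mul (hZ b hb)
  simp_rw [hexp]
  rw [integral_finsetSum _ fun a ha =>
    integrable_finsetSum _ fun b hb => (hint a ha b hb).const_mul _]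
  refine Finset.sum_congr rfl fun a ha => ?_
  rw [integral_finsetSum _ fun b hb => (hint a ha b hb).const_mul _,
    Finset.sum_eq_single_of_mem a ha fun b hb hba => by
      rw [integral_const_mul, horth a ha b hb (Ne.symm hba), mul_zero],
    integral_const_mul]
  simp only [← sq]

theorem sum_sum_sq_cov_div_eq_card_sub_one {ι : Type*} [DecidableEq ι] (s : Finset ι)
    (p : ι → ℝ) (hp_pos : ∀ i ∈ s, 0 < p i) (hp_sum : ∑ i ∈ s, p i = 1) :
    ∑ i ∈ s, ∑ i' ∈ s, ((if i = i' then p i else 0) - p i * p i') ^ 2 / (p i * p i')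
      = s.card - 1 := by
  have hterm : ∀ i ∈ s, ∀ i' ∈ s,
      ((if i = i' then p i else 0) - p i * p i') ^ 2 / (p i * p i')
        = (if i = i' then 1 - 2 * p i else 0) + p i * p i' := by
    intro i hi i' hi'
    have := hp_pos i hi
    have := hp_pos i' hi'
    split_ifs with h
    · subst h; field_simp; ring
    · field_simp; ring
  calc _ = ∑ i ∈ s, (1 - 2 * p i) + (∑ i ∈ s, p i) * ∑ i' ∈ s, p i' := by
        rw [Finset.sum_congr rfl fun i hi => Finset.sum_congr rfl (hterm i hi),
          Finset.sum_mul_sum, ← Finset.sum_add_distrib]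
        refine Finset.sum_congr rfl fun i hi => ?_
        rw [Finset.sum_add_distrib, Finset.sum_ite_eq, if_pos hi]
    _ = s.card - 1 := by
        rw [Finset.sum_sub_distrib, ← Finset.mul_sum, hp_sum, Finset.sum_const, nsmul_one]
        ring

theorem indicator_eq_ite {Ω : Type*} (X : Ω → ℕ) (i : ℕ) :
    {ω | X ω = i}.indicator (1 : Ω → ℝ) = fun ω => if X ω = i then 1 else 0 := by
  ext ω; simp [Set.indicator_apply]

section Draws

variable {Ω : Type*} [MeasurableSpace Ω] {P : Measure Ω} {p : ℕ → ℝ} {X : ℕ → Ω → ℕ}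
  {i i' j : ℕ}

theorem measurable_deltaRV (hX : Measurable (X j)) : Measurable (deltaRV p X i j) :=
  show Measurable ((fun x => (if x = i then (1 : ℝ) else 0) - p i) ∘ X j) from
    measurable_from_nat.comp hX

theorem memLp_top_deltaRV (hX : Measurable (X j)) : MemLp (deltaRV p X i j) ⊤ P := by
  refine memLp_top_of_bound (measurable_deltaRV hX).aestronglyMeasurable (1 + |p i|)
    (ae_of_all _ fun ω => ?_)
  rw [deltaRV, Real.norm_eq_abs]
  refine (abs_sub _ _).trans ?_
  gcongr
  split_ifs <;> simp

theorem memLp_top_DeltaRV (hX : ∀ j, Measurable (X j)) (l : ℕ) : MemLp (DeltaRV p X i l) ⊤ P :=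
  memLp_finsetSum _ fun j _ => memLp_top_deltaRV (hX j)

theorem integrable_ite_eq [IsFiniteMeasure P] (hX : Measurable (X j)) :
    Integrable (fun ω => if X j ω = i then (1 : ℝ) else 0) P :=
  indicator_eq_ite (X j) i ▸ (integrable_const 1).indicator (hX (measurableSet_singleton i))

theorem integral_ite_eq (hX : Measurable (X j)) (hp : 0 ≤ p i)
    (hdist : P {ω | X j ω = i} = ENNReal.ofReal (p i)) :
    ∫ ω, (if X j ω = i then (1 : ℝ) else 0) ∂P = p i := by
  have hset : MeasurableSet {ω | X j ω = i} := hX (measurableSet_singleton i)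
  rw [← indicator_eq_ite]
  exact (integral_indicator_one hset).trans
    (by rw [measureReal_def, hdist, ENNReal.toReal_ofReal hp])

theorem integral_deltaRV [IsProbabilityMeasure P] (hX : Measurable (X j)) (hp : 0 ≤ p i)
    (hdist : P {ω | X j ω = i} = ENNReal.ofReal (p i)) :
    ∫ ω, deltaRV p X i j ω ∂P = 0 := by
  simp only [deltaRV]
  rw [integral_sub (integrable_ite_eq hX) (integrable_const _), integral_ite_eq hX hp hdist]
  simp

theorem integral_deltaRV_mul_deltaRV [IsProbabilityMeasure P] (hX : Measurable (X j))
    (hp : 0 ≤ p i) (hdist : P {ω | X j ω = i} = ENNReal.ofReal (p i))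
    (hp' : 0 ≤ p i') (hdist' : P {ω | X j ω = i'} = ENNReal.ofReal (p i')) :
    ∫ ω, deltaRV p X i j ω * deltaRV p X i' j ω ∂P = (if i = i' then p i else 0) - p i * p i' := by
  -- On `{X j = i}` the second factor is the constant `[i = i'] - p i'`.
  have hpt : ∀ ω, deltaRV p X i j ω * deltaRV p X i' j ω =
      ((if i = i' then 1 else 0) - p i') * (if X j ω = i then 1 else 0) -
        p i * deltaRV p X i' j ω := by
    intro ω
    by_cases h : X j ω = i
    · subst h; simp only [deltaRV, if_true]; ring
    · simp only [deltaRV, h, if_false]; ring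
  simp_rw [hpt]
  rw [integral_sub ((integrable_ite_eq hX).const_mul _)
      (((memLp_top_deltaRV hX).integrable le_top).const_mul _),
    integral_const_mul, integral_const_mul, integral_ite_eq hX hp hdist,
    integral_deltaRV hX hp' hdist']
  split_ifs <;> ring

end Draws

theorem measurable_iSup_comap_deltaRV {Ω : Type*} {p : ℕ → ℝ} {X : ℕ → Ω → ℕ} {n : ℕ}
    {S : Set (Fin n)} {u : Fin n} (hu : u ∈ S) (i : ℕ) :
    Measurable[⨆ v ∈ S, MeasurableSpace.comap (X v.1) inferInstance] (deltaRV p X i u) :=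
  measurable_iSup_comap_of_mem (X := fun j : Fin n => X j.1)
    (g := fun x => (if x = i then 1 else 0) - p i) hu measurable_from_nat

section Independent

variable {Ω : Type*} [MeasurableSpace Ω] {P : Measure Ω} {p : ℕ → ℝ} {X : ℕ → Ω → ℕ} {n : ℕ}
  (hX_meas : ∀ j, Measurable (X j)) (hX_indep : iIndepFun (fun j : Fin n => X j.1) P)
include hX_meas hX_indep

theorem integral_deltaRV_mul₄_of_ne {i i' m b m' b' : ℕ} (hmb : m < b) (hb : b < n)
    (hmb' : m' < b') (hb' : b' < n) (hne : ¬(m = m' ∧ b = b'))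
    (hmean : ∀ j < n, ∫ ω, deltaRV p X i j ω ∂P = 0)
    (hmean' : ∀ j < n, ∫ ω, deltaRV p X i' j ω ∂P = 0) :
    ∫ ω, deltaRV p X i m ω * deltaRV p X i b ω * deltaRV p X i' m' ω * deltaRV p X i' b' ω ∂P
      = 0 := by
  wlog hlt : b < b' ∨ b = b' ∧ m < m' generalizing i i' m b m' b'
  · rw [← this hmb' hb' hmb hb (by omega) hmean' hmean (by omega)]
    congr 1; ext ω; ring
  have hδ : ∀ {S : Set (Fin n)} (l u : ℕ) (hu : u < n), ⟨u, hu⟩ ∈ S →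
      Measurable[⨆ v ∈ S, MeasurableSpace.comap (X v.1) inferInstance] (deltaRV p X l u) :=
    fun l u hu hS => measurable_iSup_comap_deltaRV (u := ⟨u, hu⟩) hS l
  rcases hlt with hbb' | ⟨rfl, hmm'⟩
  · -- `X b'` enters only the last factor, whose mean is zero
    let S : Set (Fin n) := {⟨m, by omega⟩, ⟨b, hb⟩, ⟨m', by omega⟩}
    calc _ = (∫ ω, deltaRV p X i m ω * deltaRV p X i b ω * deltaRV p X i' m' ω ∂P) *
          ∫ ω, deltaRV p X i' b' ω ∂P :=
          hX_indep.integral_mul_comp_eq_mul (fun j => hX_meas j) (t := ⟨b', hb'⟩) (S := S)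
            (F := fun ω => deltaRV p X i m ω * deltaRV p X i b ω * deltaRV p X i' m' ω)
            (g := fun x => (if x = i' then 1 else 0) - p i')
            (by simp [S, Fin.ext_iff]; omega)
            (((hδ i m (by omega) (by simp [S])).mul (hδ i b hb (by simp [S]))).mul
              (hδ i' m' (by omega) (by simp [S]))) measurable_from_nat
      _ = 0 := by rw [hmean' b' hb', mul_zero]
  · -- `X m'` enters only the factor `δ_{i',m'}`, whose mean is zero
    let S : Set (Fin n) := {⟨m, by omega⟩, ⟨b, hb⟩}
    calc _ = ∫ ω, deltaRV p X i m ω * deltaRV p X i b ω * deltaRV p X i' b ω *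
          deltaRV p X i' m' ω ∂P := by congr 1; ext ω; ring
      _ = (∫ ω, deltaRV p X i m ω * deltaRV p X i b ω * deltaRV p X i' b ω ∂P) *
          ∫ ω, deltaRV p X i' m' ω ∂P :=
          hX_indep.integral_mul_comp_eq_mul (fun j => hX_meas j) (t := ⟨m', by omega⟩) (S := S)
            (F := fun ω => deltaRV p X i m ω * deltaRV p X i b ω * deltaRV p X i' b ω)
            (g := fun x => (if x = i' then 1 else 0) - p i')
            (by simp [S, Fin.ext_iff]; omega)
            (((hδ i m (by omega) (by simp [S])).mul (hδ i b hb (by simp [S]))).mul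
              (hδ i' b hb (by simp [S]))) measurable_from_nat
      _ = 0 := by rw [hmean' m' (by omega), mul_zero]

theorem integral_deltaRV_mul₄_self {i i' m b : ℕ} (hmb : m < b) (hb : b < n) :
    ∫ ω, deltaRV p X i m ω * deltaRV p X i b ω * deltaRV p X i' m ω * deltaRV p X i' b ω ∂P
      = (∫ ω, deltaRV p X i m ω * deltaRV p X i' m ω ∂P) *
        ∫ ω, deltaRV p X i b ω * deltaRV p X i' b ω ∂P := by
  have hδ : ∀ l, Measurable[⨆ v ∈ ({⟨m, by omega⟩} : Set (Fin n)),
      MeasurableSpace.comap (X v.1) inferInstance] (deltaRV p X l m) :=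
    fun l => measurable_iSup_comap_deltaRV (u := ⟨m, by omega⟩) (Set.mem_singleton _) l
  calc _ = ∫ ω, deltaRV p X i m ω * deltaRV p X i' m ω *
        (deltaRV p X i b ω * deltaRV p X i' b ω) ∂P := by congr 1; ext ω; ring
    _ = _ := hX_indep.integral_mul_comp_eq_mul (fun j => hX_meas j) (t := ⟨b, hb⟩)
          (F := fun ω => deltaRV p X i m ω * deltaRV p X i' m ω)
          (g := fun x => ((if x = i then 1 else 0) - p i) * ((if x = i' then 1 else 0) - p i'))
          (by simp [Fin.ext_iff]; omega) ((hδ i).mul (hδ i')) measurable_from_nat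

end Independent

section Increments

variable {Ω : Type*} [MeasurableSpace Ω] {P : Measure Ω} {p : ℕ → ℝ} {X : ℕ → Ω → ℕ}

theorem integrable_deltaRV_mul₄ [IsFiniteMeasure P] (hX_meas : ∀ j, Measurable (X j))
    (i i' m b m' b' : ℕ) :
    Integrable (fun ω => deltaRV p X i m ω * deltaRV p X i b ω * deltaRV p X i' m' ω *
      deltaRV p X i' b' ω) P :=
  have hδ : ∀ l j, MemLp (deltaRV p X l j) ⊤ P := fun l j => memLp_top_deltaRV (i := l) (hX_meas j)
  ((hδ i' b').mul' (r := ⊤) ((hδ i' m').mul' (r := ⊤) ((hδ i b).mul' (r := ⊤)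
    (hδ i m)))).integrable le_top

theorem memLp_top_DeltaRV_mul_deltaRV (hX_meas : ∀ j, Measurable (X j)) (i b : ℕ) :
    MemLp (fun ω => DeltaRV p X i b ω * deltaRV p X i b ω) ⊤ P :=
  (memLp_top_deltaRV (hX_meas b)).mul' (memLp_top_DeltaRV hX_meas b)

/-- `∑_{i ∈ s} Δ_{i,b} δ_{i,b+1} / p_i` in the paper's one-based indexing of draws. -/
noncomputable def martingaleIncrement (s : Finset ℕ) (p : ℕ → ℝ) (X : ℕ → Ω → ℕ) (b : ℕ)
    (ω : Ω) : ℝ :=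
  ∑ i ∈ s, DeltaRV p X i b ω * deltaRV p X i b ω / p i

theorem memLp_top_martingaleIncrement (hX_meas : ∀ j, Measurable (X j)) (s : Finset ℕ) (b : ℕ) :
    MemLp (martingaleIncrement s p X b) ⊤ P :=
  memLp_finsetSum _ fun i _ => (memLp_top_DeltaRV_mul_deltaRV hX_meas i b).mul_const (p i)⁻¹

end Increments

section Moments

variable {Ω : Type*} [MeasurableSpace Ω] {P : Measure Ω} [IsProbabilityMeasure P] {p : ℕ → ℝ}
  {X : ℕ → Ω → ℕ} {n : ℕ} {s : Finset ℕ}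
  (hX_meas : ∀ j, Measurable (X j)) (hX_indep : iIndepFun (fun j : Fin n => X j.1) P)
  (hp_pos : ∀ i ∈ s, 0 < p i)
  (hX_dist : ∀ j < n, ∀ i ∈ s, P {ω | X j ω = i} = ENNReal.ofReal (p i))
include hX_meas hX_indep hp_pos hX_dist

theorem integral_deltaRV_mul₄ {i i' m b m' b' : ℕ} (hi : i ∈ s) (hi' : i' ∈ s)
    (hmb : m < b) (hb : b < n) (hmb' : m' < b') (hb' : b' < n) :
    ∫ ω, deltaRV p X i m ω * deltaRV p X i b ω * deltaRV p X i' m' ω * deltaRV p X i' b' ω ∂P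
      = if m = m' ∧ b = b' then ((if i = i' then p i else 0) - p i * p i') ^ 2 else 0 := by
  have hmean : ∀ l ∈ s, ∀ j < n, ∫ ω, deltaRV p X l j ω ∂P = 0 := fun l hl j hj =>
    integral_deltaRV (hX_meas j) (hp_pos l hl).le (hX_dist j hj l hl)
  have hcov : ∀ j < n, ∫ ω, deltaRV p X i j ω * deltaRV p X i' j ω ∂P
      = (if i = i' then p i else 0) - p i * p i' := fun j hj =>
    integral_deltaRV_mul_deltaRV (hX_meas j) (hp_pos i hi).le (hX_dist j hj i hi)
      (hp_pos i' hi').le (hX_dist j hj i' hi')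
  by_cases h : m = m' ∧ b = b'
  · obtain ⟨rfl, rfl⟩ := h
    rw [if_pos ⟨rfl, rfl⟩, integral_deltaRV_mul₄_self hX_meas hX_indep hmb hb, hcov m (by omega),
      hcov b hb, sq]
  · rw [if_neg h]
    exact integral_deltaRV_mul₄_of_ne hX_meas hX_indep hmb hb hmb' hb' h
      (hmean i hi) (hmean i' hi')


theorem integral_DeltaRV_mul_deltaRV_mul {i i' b b' : ℕ} (hi : i ∈ s) (hi' : i' ∈ s)
    (hb : b < n) (hb' : b' < n) :
    ∫ ω, DeltaRV p X i b ω * deltaRV p X i b ω * (DeltaRV p X i' b' ω * deltaRV p X i' b' ω) ∂P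
      = if b = b' then b * ((if i = i' then p i else 0) - p i * p i') ^ 2 else 0 := by
  have hexp : ∀ ω,
      DeltaRV p X i b ω * deltaRV p X i b ω * (DeltaRV p X i' b' ω * deltaRV p X i' b' ω)
        = ∑ m ∈ Finset.range b, ∑ m' ∈ Finset.range b', deltaRV p X i m ω *
          deltaRV p X i b ω * deltaRV p X i' m' ω * deltaRV p X i' b' ω := fun ω => by
    simp only [DeltaRV, Finset.sum_mul]
    simp only [Finset.mul_sum]
    exact Finset.sum_congr rfl fun m _ => Finset.sum_congr rfl fun m' _ => by ring
  simp_rw [hexp]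
  rw [integral_finsetSum _ fun m _ => integrable_finsetSum _ fun m' _ =>
    integrable_deltaRV_mul₄ hX_meas i i' m b m' b']
  simp_rw [integral_finsetSum _ fun m' _ => integrable_deltaRV_mul₄ hX_meas i i' _ b m' b']
  rw [Finset.sum_congr rfl fun m hm => Finset.sum_congr rfl fun m' hm' =>
    integral_deltaRV_mul₄ hX_meas hX_indep hp_pos hX_dist hi hi' (Finset.mem_range.1 hm) hb
      (Finset.mem_range.1 hm') hb']
  by_cases hbb' : b = b'
  · subst hbb'
    simp [Finset.sum_ite_eq]
    rw [Finset.sum_ite_of_true fun m hm => Finset.mem_range.1 hm]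
    simp
  · simp [hbb']

theorem integral_martingaleIncrement_mul (hp_sum : ∑ i ∈ s, p i = 1) {b b' : ℕ} (hb : b < n)
    (hb' : b' < n) :
    ∫ ω, martingaleIncrement s p X b ω * martingaleIncrement s p X b' ω ∂P
      = if b = b' then (b : ℝ) * ((s.card : ℝ) - 1) else 0 := by
  have hexp : ∀ ω, martingaleIncrement s p X b ω * martingaleIncrement s p X b' ω
      = ∑ i ∈ s, ∑ i' ∈ s, (p i * p i')⁻¹ *
        (DeltaRV p X i b ω * deltaRV p X i b ω * (DeltaRV p X i' b' ω * deltaRV p X i' b' ω)) :=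
    fun ω => by
      rw [martingaleIncrement, martingaleIncrement, Finset.sum_mul_sum]
      exact Finset.sum_congr rfl fun i _ => Finset.sum_congr rfl fun i' _ => by
        rw [mul_inv]; ring
  have hint : ∀ i i', Integrable (fun ω => DeltaRV p X i b ω * deltaRV p X i b ω *
      (DeltaRV p X i' b' ω * deltaRV p X i' b' ω)) P := fun i i' =>
    ((memLp_top_DeltaRV_mul_deltaRV hX_meas i' b').mul' (r := ⊤)
      (memLp_top_DeltaRV_mul_deltaRV hX_meas i b)).integrable le_top
  simp_rw [hexp]
  rw [integral_finsetSum _ fun i _ => integrable_finsetSum _ fun i' _ => (hint i i').const_mul _]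
  simp_rw [integral_finsetSum _ fun i' _ => (hint _ i').const_mul _, integral_const_mul]
  rw [Finset.sum_congr rfl fun i hi => Finset.sum_congr rfl fun i' hi' => by
    rw [integral_DeltaRV_mul_deltaRV_mul hX_meas hX_indep hp_pos hX_dist hi hi' hb hb']]
  by_cases hbb' : b = b'
  · simp only [hbb', if_true]
    rw [← sum_sum_sq_cov_div_eq_card_sub_one s p hp_pos hp_sum, Finset.mul_sum]
    refine Finset.sum_congr rfl fun i _ => ?_
    rw [Finset.mul_sum]
    exact Finset.sum_congr rfl fun i' _ => by ring
  · simp [hbb']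

end Moments

theorem weighted_martingale_second_moment_general
    {Ω : Type*} [MeasurableSpace Ω] (P : Measure Ω) [IsProbabilityMeasure P]
    (n k : ℕ)
    (p : ℕ → ℝ)
    (hp_pos : ∀ i ∈ Finset.Icc 1 k, 0 < p i)
    (hp_sum : ∑ i ∈ Finset.Icc 1 k, p i = 1)
    (X : ℕ → Ω → ℕ)
    (hX_meas : ∀ j, Measurable (X j))
    (hX_indep : iIndepFun
      (fun j : Fin n => X j.1) P)
    (hX_dist : ∀ j < n, ∀ i ∈ Finset.Icc 1 k,
      P {ω | X j ω = i} = ENNReal.ofReal (p i)) :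
    ∫ ω, (∑ j ∈ Finset.Icc 2 n, ((n : ℝ) - (j : ℝ)) *
        ∑ i ∈ Finset.Icc 1 k, DeltaRV p X i (j - 1) ω * deltaRV p X i (j - 1) ω / p i) ^ 2 ∂P =
      ((k : ℝ) - 1) * ∑ j ∈ Finset.Icc 2 n, ((n : ℝ) - (j : ℝ)) ^ 2 * ((j : ℝ) - 1) := by
  set Y := martingaleIncrement (Finset.Icc 1 k) p X
  have hY : ∀ j ∈ Finset.Icc 2 n, ∀ j' ∈ Finset.Icc 2 n, ∫ ω, Y (j - 1) ω * Y (j' - 1) ω ∂P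
      = if j = j' then ((j : ℝ) - 1) * ((k : ℝ) - 1) else 0 := by
    intro j hj j' hj'
    rw [Finset.mem_Icc] at hj hj'
    rw [integral_martingaleIncrement_mul hX_meas hX_indep hp_pos hX_dist hp_sum (by omega)
      (by omega), Nat.card_Icc, Nat.add_sub_cancel, Nat.cast_pred (by omega)]
    exact if_congr (by omega) rfl rfl
  calc _ = ∑ j ∈ Finset.Icc 2 n, ((n : ℝ) - j) ^ 2 * ∫ ω, Y (j - 1) ω ^ 2 ∂P :=
        integral_sq_sum_of_orthogonal _ _
          (fun j _ => (memLp_top_martingaleIncrement hX_meas _ _).mono_exponent le_top)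
          fun j hj j' hj' hne => by rw [hY j hj j' hj', if_neg hne]
    _ = _ := by
        rw [Finset.mul_sum]
        refine Finset.sum_congr rfl fun j hj => ?_
        simp_rw [sq (Y _ _)]
        rw [hY j hj j hj, if_pos rfl]
        ring

theorem weighted_martingale_second_moment
    {Ω : Type*} [MeasurableSpace Ω] (P : Measure Ω) [IsProbabilityMeasure P]
    (n k : ℕ) (hn : 2 ≤ n) (hk : 2 ≤ k)
    (p : ℕ → ℝ)
    (hp_pos : ∀ i ∈ Finset.Icc 1 k, 0 < p i)
    (hp_sum : ∑ i ∈ Finset.Icc 1 k, p i = 1)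
    (X : ℕ → Ω → ℕ)
    (hX_meas : ∀ j, Measurable (X j))
    (hX_range : ∀ j < n, ∀ ω, X j ω ∈ Finset.Icc 1 k)
    (hX_indep : iIndepFun
      (fun j : Fin n => X j.1) P)
    (hX_dist : ∀ j < n, ∀ i ∈ Finset.Icc 1 k,
      P {ω | X j ω = i} = ENNReal.ofReal (p i)) :
    ∫ ω, (∑ j ∈ Finset.Icc 2 n, ((n : ℝ) - (j : ℝ)) *
        ∑ i ∈ Finset.Icc 1 k, DeltaRV p X i (j - 1) ω * deltaRV p X i (j - 1) ω / p i) ^ 2 ∂P =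
      ((k : ℝ) - 1) * ∑ j ∈ Finset.Icc 2 n, ((n : ℝ) - (j : ℝ)) ^ 2 * ((j : ℝ) - 1) :=
  weighted_martingale_second_moment_general P n k p hp_pos hp_sum X hX_meas hX_indep hX_dist
end

section
/- Let X be a random variable with P(X = i) = p_i for 1 ≤ i ≤ k, let c_1,…,c_k be nonnegative reals with ∑_{i=1}^{k} c_i = k, and set y = ∑_{i=1}^{k} c_i 1{X = i}/p_i − k and β_j = ∑_{i=1}^{k} c_i^{j+1}/p_i^{j} − k^{j+1} for j ≥ 1. Then E[y⁴] = β₃ − 4k β₂ + 6k² β₁; in particular, since β₂ ≥ 0, E[y⁴] ≤ β₃ + 6k² β₁. -/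
/-! Since `X` takes exactly one value, `y = c_X / p_X - k`, so `E[y⁴] = ∑ pᵢ (cᵢ/pᵢ - k)⁴`; expanding
the fourth power and using `∑ pᵢ = 1`, `∑ cᵢ = k` gives the identity. The bound follows from
`β₂ ≥ 0`, i.e. `k³ = (∑ pᵢ (cᵢ/pᵢ))³ ≤ ∑ pᵢ (cᵢ/pᵢ)³`, which is Jensen's inequality for `t ↦ t³`
on `[0, ∞)`. -/

open MeasureTheory ProbabilityTheory Finset

theorem integral_comp_eq_sum_of_forall_mem {Ω α E : Type*} [MeasurableSpace Ω]
    [MeasurableSpace α] [MeasurableSingletonClass α] [NormedAddCommGroup E] [NormedSpace ℝ E]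
    [CompleteSpace E] {μ : Measure Ω} [IsFiniteMeasure μ] {X : Ω → α} (hX : Measurable X)
    {s : Finset α} (hs : ∀ ω, X ω ∈ s) (f : α → E) :
    ∫ ω, f (X ω) ∂μ = ∑ i ∈ s, μ.real (X ⁻¹' {i}) • f i := by
  have h_indicator :
      (fun ω ↦ f (X ω)) = fun ω ↦ ∑ i ∈ s, (X ⁻¹' {i}).indicator (fun _ ↦ f i) ω := by
    funext ω
    rw [Finset.sum_eq_single_of_mem (X ω) (hs ω)]
    · simp
    · intro i _ hi
      exact Set.indicator_of_notMem (Ne.symm hi) _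
  rw [h_indicator, integral_finsetSum s fun i _ ↦
    (integrable_const (f i)).indicator (hX (measurableSet_singleton i))]
  exact Finset.sum_congr rfl fun i _ ↦ integral_indicator_const _ (hX (measurableSet_singleton i))

theorem sum_mul_div_sub_pow_four {ι : Type*} (s : Finset ι) {p c : ι → ℝ} {m : ℝ}
    (hp : ∀ i ∈ s, p i ≠ 0) (hp_sum : ∑ i ∈ s, p i = 1) (hc_sum : ∑ i ∈ s, c i = m) :
    ∑ i ∈ s, p i * (c i / p i - m) ^ 4 =
      (∑ i ∈ s, c i ^ 4 / p i ^ 3 - m ^ 4) - 4 * m * (∑ i ∈ s, c i ^ 3 / p i ^ 2 - m ^ 3) +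
        6 * m ^ 2 * (∑ i ∈ s, c i ^ 2 / p i - m ^ 2) := by
  have h_expand : ∀ i ∈ s, p i * (c i / p i - m) ^ 4 =
      c i ^ 4 / p i ^ 3 - 4 * m * (c i ^ 3 / p i ^ 2) + 6 * m ^ 2 * (c i ^ 2 / p i)
        - 4 * m ^ 3 * c i + m ^ 4 * p i := by
    intro i hi
    field_simp [hp i hi]
    ring
  rw [Finset.sum_congr rfl h_expand]
  simp only [Finset.sum_add_distrib, Finset.sum_sub_distrib, ← Finset.mul_sum, hp_sum, hc_sum]
  ring

theorem pow_sum_le_sum_pow_div_pow {ι : Type*} (s : Finset ι) {p c : ι → ℝ}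
    (hp : ∀ i ∈ s, 0 < p i) (hp_sum : ∑ i ∈ s, p i = 1) (hc : ∀ i ∈ s, 0 ≤ c i) (n : ℕ) :
    (∑ i ∈ s, c i) ^ (n + 1) ≤ ∑ i ∈ s, c i ^ (n + 1) / p i ^ n := by
  have h_mean : ∀ i ∈ s, p i * (c i / p i) = c i := fun i hi ↦
    mul_div_cancel₀ _ (hp i hi).ne'
  have h_pow : ∀ i ∈ s, p i * (c i / p i) ^ (n + 1) = c i ^ (n + 1) / p i ^ n := by
    intro i hi
    rw [div_pow, pow_succ (p i)]
    field_simp [(hp i hi).ne']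
  rw [← Finset.sum_congr rfl h_mean, ← Finset.sum_congr rfl h_pow]
  exact Real.pow_arith_mean_le_arith_mean_pow s p _ (fun i hi ↦ (hp i hi).le) hp_sum
    (fun i hi ↦ div_nonneg (hc i hi) (hp i hi).le) (n + 1)

theorem y_fourth_moment_general
    {Ω : Type*} [MeasurableSpace Ω] (P : Measure Ω) [IsProbabilityMeasure P]
    (k : ℕ)
    (p c : ℕ → ℝ)
    (hp_pos : ∀ i ∈ Finset.Icc 1 k, 0 < p i)
    (hp_sum : ∑ i ∈ Finset.Icc 1 k, p i = 1)
    (hc_nonneg : ∀ i ∈ Finset.Icc 1 k, 0 ≤ c i)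
    (hc_sum : ∑ i ∈ Finset.Icc 1 k, c i = (k : ℝ))
    (X : Ω → ℕ)
    (hX_meas : Measurable X)
    (hX_range : ∀ ω, X ω ∈ Finset.Icc 1 k)
    (hX_dist : ∀ i ∈ Finset.Icc 1 k, P {ω | X ω = i} = ENNReal.ofReal (p i)) :
    (∫ ω, (∑ i ∈ Finset.Icc 1 k,
          c i * (if X ω = i then (1 : ℝ) else 0) / p i - (k : ℝ)) ^ 4 ∂P) =
        (∑ i ∈ Finset.Icc 1 k, c i ^ 4 / p i ^ 3 - (k : ℝ) ^ 4) -
          4 * (k : ℝ) * (∑ i ∈ Finset.Icc 1 k, c i ^ 3 / p i ^ 2 - (k : ℝ) ^ 3) +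
          6 * (k : ℝ) ^ 2 * (∑ i ∈ Finset.Icc 1 k, c i ^ 2 / p i - (k : ℝ) ^ 2) ∧
    (∫ ω, (∑ i ∈ Finset.Icc 1 k,
          c i * (if X ω = i then (1 : ℝ) else 0) / p i - (k : ℝ)) ^ 4 ∂P) ≤
        (∑ i ∈ Finset.Icc 1 k, c i ^ 4 / p i ^ 3 - (k : ℝ) ^ 4) +
          6 * (k : ℝ) ^ 2 * (∑ i ∈ Finset.Icc 1 k, c i ^ 2 / p i - (k : ℝ) ^ 2) := by
  have h_y : ∀ ω, ∑ i ∈ Icc 1 k, c i * (if X ω = i then (1 : ℝ) else 0) / p i =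
      c (X ω) / p (X ω) := by
    intro ω
    simp only [mul_ite, mul_one, mul_zero, ite_div, zero_div]
    rw [Finset.sum_ite_eq, if_pos (hX_range ω)]
  have h_moment : ∫ ω, (∑ i ∈ Icc 1 k,
      c i * (if X ω = i then (1 : ℝ) else 0) / p i - (k : ℝ)) ^ 4 ∂P =
        ∑ i ∈ Icc 1 k, p i * (c i / p i - k) ^ 4 := by
    simp only [h_y]
    rw [integral_comp_eq_sum_of_forall_mem hX_meas hX_range fun i ↦ (c i / p i - k) ^ 4]
    refine Finset.sum_congr rfl fun i hi ↦ ?_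
    have h_law : P (X ⁻¹' {i}) = ENNReal.ofReal (p i) := hX_dist i hi
    rw [measureReal_def, h_law, ENNReal.toReal_ofReal (hp_pos i hi).le, smul_eq_mul]
  rw [h_moment, sum_mul_div_sub_pow_four _ (fun i hi ↦ (hp_pos i hi).ne') hp_sum hc_sum]
  refine ⟨rfl, ?_⟩
  have h_beta₂ : (k : ℝ) ^ 3 ≤ ∑ i ∈ Icc 1 k, c i ^ 3 / p i ^ 2 :=
    hc_sum ▸ pow_sum_le_sum_pow_div_pow _ hp_pos hp_sum hc_nonneg 2
  have hk : (0 : ℝ) ≤ k := k.cast_nonneg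
  linarith [mul_nonneg hk (sub_nonneg.2 h_beta₂)]

theorem y_fourth_moment
    {Ω : Type*} [MeasurableSpace Ω] (P : Measure Ω) [IsProbabilityMeasure P]
    (k : ℕ) (hk : 2 ≤ k)
    (p c : ℕ → ℝ)
    (hp_pos : ∀ i ∈ Finset.Icc 1 k, 0 < p i)
    (hp_sum : ∑ i ∈ Finset.Icc 1 k, p i = 1)
    (hc_nonneg : ∀ i ∈ Finset.Icc 1 k, 0 ≤ c i)
    (hc_sum : ∑ i ∈ Finset.Icc 1 k, c i = (k : ℝ))
    (X : Ω → ℕ)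
    (hX_meas : Measurable X)
    (hX_range : ∀ ω, X ω ∈ Finset.Icc 1 k)
    (hX_dist : ∀ i ∈ Finset.Icc 1 k, P {ω | X ω = i} = ENNReal.ofReal (p i)) :
    (∫ ω, (∑ i ∈ Finset.Icc 1 k,
          c i * (if X ω = i then (1 : ℝ) else 0) / p i - (k : ℝ)) ^ 4 ∂P) =
        (∑ i ∈ Finset.Icc 1 k, c i ^ 4 / p i ^ 3 - (k : ℝ) ^ 4) -
          4 * (k : ℝ) * (∑ i ∈ Finset.Icc 1 k, c i ^ 3 / p i ^ 2 - (k : ℝ) ^ 3) +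
          6 * (k : ℝ) ^ 2 * (∑ i ∈ Finset.Icc 1 k, c i ^ 2 / p i - (k : ℝ) ^ 2) ∧
    (∫ ω, (∑ i ∈ Finset.Icc 1 k,
          c i * (if X ω = i then (1 : ℝ) else 0) / p i - (k : ℝ)) ^ 4 ∂P) ≤
        (∑ i ∈ Finset.Icc 1 k, c i ^ 4 / p i ^ 3 - (k : ℝ) ^ 4) +
          6 * (k : ℝ) ^ 2 * (∑ i ∈ Finset.Icc 1 k, c i ^ 2 / p i - (k : ℝ) ^ 2) :=
  y_fourth_moment_general P k p c hp_pos hp_sum hc_nonneg hc_sum X hX_meas hX_range hX_dist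
end
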